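/- Let G be a group. The map 𝔩: G → Γ_set, g ↦ restriction of left multiplication λ_g to the complement of {1, g⁻¹} (viewed as a partial bijection of G \ {1} with domain G \ {1, g⁻¹} and image G \ {1, g}), is a unital premorphism from G to the inverse monoid of partial bijections of G \ {1}. -/
import Mathlib


set_option linter.unusedTactic false

/-- A partial bijection of a set (here: of a type `α`), normalized to be the
identity outside its domain, so that equality of `PBij`s corresponds to
equality of partial maps. -/
structure PBij (α : Type*) where
  dom : Set α
  im : Set α
  toFun : α → α
  invFun : α → α
  mapsTo : Set.MapsTo toFun dom im
  invMapsTo : Set.MapsTo invFun im dom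
  leftInv : ∀ x ∈ dom, invFun (toFun x) = x
  rightInv : ∀ y ∈ im, toFun (invFun y) = y
  toFun_id : ∀ x, x ∉ dom → toFun x = x
  invFun_id : ∀ y, y ∉ im → invFun y = y

namespace PBij
variable {α : Type*}

open Classical in
/-- Composition of partial bijections (`comp f g = f ∘ g` on the largest domain
where it makes sense). -/
noncomputable def comp (f g : PBij α) : PBij α where
  dom := g.dom ∩ g.toFun ⁻¹' f.dom
  im := f.im ∩ f.invFun ⁻¹' g.im
  toFun := fun x => if x ∈ g.dom ∩ g.toFun ⁻¹' f.dom then f.toFun (g.toFun x) else x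
  invFun := fun y => if y ∈ f.im ∩ f.invFun ⁻¹' g.im then g.invFun (f.invFun y) else y
  mapsTo := fun x hx => by
    beta_reduce
    rw [if_pos hx]
    exact ⟨f.mapsTo hx.2, by
      simp only [Set.mem_preimage]
      rw [f.leftInv _ hx.2]; exact g.mapsTo hx.1⟩
  invMapsTo := fun y hy => by
    beta_reduce
    rw [if_pos hy]
    exact ⟨g.invMapsTo hy.2, by
      simp only [Set.mem_preimage]
      rw [g.rightInv _ hy.2]; exact f.invMapsTo hy.1⟩
  leftInv := fun x hx => by
    beta_reduce
    rw [if_pos hx]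
    beta_reduce
    rw [if_pos]
    · rw [f.leftInv _ hx.2]; exact g.leftInv _ hx.1
    · exact ⟨f.mapsTo hx.2, by
        simp only [Set.mem_preimage]
        rw [f.leftInv _ hx.2]; exact g.mapsTo hx.1⟩
  rightInv := fun y hy => by
    beta_reduce
    rw [if_pos hy]
    beta_reduce
    rw [if_pos]
    · rw [g.rightInv _ hy.2]; exact f.rightInv _ hy.1
    · exact ⟨g.invMapsTo hy.2, by
        simp only [Set.mem_preimage]
        rw [g.rightInv _ hy.2]; exact f.invMapsTo hy.1⟩
  toFun_id := fun x hx => if_neg hx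
  invFun_id := fun y hy => if_neg hy

/-- The inverse of a partial bijection. -/
def inv (f : PBij α) : PBij α where
  dom := f.im
  im := f.dom
  toFun := f.invFun
  invFun := f.toFun
  mapsTo := f.invMapsTo
  invMapsTo := f.mapsTo
  leftInv := f.rightInv
  rightInv := f.leftInv
  toFun_id := f.invFun_id
  invFun_id := f.toFun_id

/-- The identity of the symmetric inverse monoid `I(α)`: the identity map
defined on all of `α`. -/
def one (α : Type*) : PBij α where
  dom := Set.univ
  im := Set.univ
  toFun := id
  invFun := id
  mapsTo := fun _ _ => trivial
  invMapsTo := fun _ _ => trivial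
  leftInv := fun _ _ => rfl
  rightInv := fun _ _ => rfl
  toFun_id := fun _ _ => rfl
  invFun_id := fun _ _ => rfl

end PBij

open Classical in
/-- The partial bijection `𝔩(g)` of `G \ {1}`: the restriction of left
multiplication `λ_g` to the complement of `{1, g⁻¹}`, with image the
complement of `{1, g}`. -/
noncomputable def lmulPB {G : Type*} [Group G] (g : G) : PBij {x : G // x ≠ 1} where
  dom := {x : {x : G // x ≠ 1} | (x : G) ≠ g⁻¹}
  im := {x : {x : G // x ≠ 1} | (x : G) ≠ g}
  toFun := fun x => if h : (x : G) ≠ g⁻¹ then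
      ⟨g * x, by intro hc; exact h ((inv_eq_of_mul_eq_one_right hc).symm)⟩ else x
  invFun := fun x => if h : (x : G) ≠ g then
      ⟨g⁻¹ * x, by
        intro hc
        apply h
        have := inv_eq_of_mul_eq_one_right hc
        simpa using this.symm⟩ else x
  mapsTo := fun x hx => by
    simp only [Set.mem_setOf_eq] at hx ⊢
    rw [dif_pos hx]
    intro hc
    exact x.2 (by simpa using mul_left_cancel ((hc : g * (x : G) = g).trans (mul_one g).symm))
  invMapsTo := fun x hx => by
    simp only [Set.mem_setOf_eq] at hx ⊢
    rw [dif_pos hx]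
    intro hc
    exact x.2 (by simpa using mul_left_cancel ((hc : g⁻¹ * (x : G) = g⁻¹).trans (mul_one g⁻¹).symm))
  leftInv := fun x hx => by
    simp only [Set.mem_setOf_eq] at hx
    beta_reduce
    rw [dif_pos hx]
    have h2 : (g * (x : G)) ≠ g := by
      intro hc
      exact x.2 (by simpa using mul_left_cancel (hc.trans (mul_one g).symm))
    rw [dif_pos h2]
    exact Subtype.ext (by simp)
  rightInv := fun x hx => by
    simp only [Set.mem_setOf_eq] at hx
    beta_reduce
    rw [dif_pos hx]
    have h2 : (g⁻¹ * (x : G)) ≠ g⁻¹ := by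
      intro hc
      exact x.2 (by simpa using mul_left_cancel (hc.trans (mul_one g⁻¹).symm))
    rw [dif_pos h2]
    exact Subtype.ext (by simp)
  toFun_id := fun x hx => dif_neg hx
  invFun_id := fun x hx => dif_neg hx


theorem PBij.ext' {α : Type*} {f g : PBij α} (hd : f.dom = g.dom) (hi : f.im = g.im)
    (ht : f.toFun = g.toFun) (hv : f.invFun = g.invFun) : f = g := by
  cases f; cases g
  dsimp at hd hi ht hv
  subst hd hi ht hv
  rfl

theorem PBij.mem_comp_dom {α : Type*} {f g : PBij α} {x : α} :
    x ∈ (f.comp g).dom ↔ x ∈ g.dom ∧ g.toFun x ∈ f.dom := Iff.rfl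

theorem PBij.mem_comp_im {α : Type*} {f g : PBij α} {y : α} :
    y ∈ (f.comp g).im ↔ y ∈ f.im ∧ f.invFun y ∈ g.im := Iff.rfl

theorem PBij.comp_toFun_pos {α : Type*} (f g : PBij α) (x : α) (hx : x ∈ (f.comp g).dom) :
    (f.comp g).toFun x = f.toFun (g.toFun x) := if_pos hx

theorem PBij.comp_toFun_neg {α : Type*} (f g : PBij α) (x : α) (hx : x ∉ (f.comp g).dom) :
    (f.comp g).toFun x = x := if_neg hx

theorem PBij.comp_invFun_pos {α : Type*} (f g : PBij α) (y : α) (hy : y ∈ (f.comp g).im) :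
    (f.comp g).invFun y = g.invFun (f.invFun y) := if_pos hy

theorem PBij.comp_invFun_neg {α : Type*} (f g : PBij α) (y : α) (hy : y ∉ (f.comp g).im) :
    (f.comp g).invFun y = y := if_neg hy

theorem mem_lm_dom {G : Type*} [Group G] {g : G} {x : {x : G // x ≠ 1}} :
    x ∈ (lmulPB g).dom ↔ (x : G) ≠ g⁻¹ := Iff.rfl

theorem mem_lm_im {G : Type*} [Group G] {g : G} {x : {x : G // x ≠ 1}} :
    x ∈ (lmulPB g).im ↔ (x : G) ≠ g := Iff.rfl

theorem lm_coe_toFun {G : Type*} [Group G] (g : G) (x : {x : G // x ≠ 1})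
    (hx : (x : G) ≠ g⁻¹) : ((lmulPB g).toFun x : G) = g * x := by
  simp [lmulPB, hx]

theorem lm_coe_invFun {G : Type*} [Group G] (g : G) (x : {x : G // x ≠ 1})
    (hx : (x : G) ≠ g) : ((lmulPB g).invFun x : G) = g⁻¹ * x := by
  simp [lmulPB, hx]

theorem hL_dom {G : Type*} [Group G] (g h : G) (x : {x : G // x ≠ 1}) :
    x ∈ ((lmulPB g⁻¹).comp ((lmulPB g).comp (lmulPB h))).dom ↔
      ((x : G) ≠ h⁻¹ ∧ (x : G) ≠ (g * h)⁻¹) := by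
  rw [PBij.mem_comp_dom, PBij.mem_comp_dom]
  constructor
  · rintro ⟨⟨ha, hb⟩, _⟩
    have ha' : (x : G) ≠ h⁻¹ := ha
    have hb' : ((lmulPB h).toFun x : G) ≠ g⁻¹ := hb
    rw [lm_coe_toFun h x ha'] at hb'
    exact ⟨ha', fun hc => hb' (by rw [hc]; group)⟩
  · rintro ⟨ha, hb⟩
    have hb' : h * (x : G) ≠ g⁻¹ := fun hc2 => hb (by rw [mul_inv_rev, ← hc2]; group)
    have hmem : (lmulPB h).toFun x ∈ (lmulPB g).dom := by
      rw [mem_lm_dom, lm_coe_toFun h x ha]; exact hb'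
    refine ⟨⟨mem_lm_dom.mpr ha, hmem⟩, ?_⟩
    show ((lmulPB g).comp (lmulPB h)).toFun x ∈ (lmulPB g⁻¹).dom
    rw [mem_lm_dom, PBij.comp_toFun_pos _ _ x ⟨mem_lm_dom.mpr ha, Set.mem_preimage.mpr hmem⟩,
      lm_coe_toFun g _ hmem, lm_coe_toFun h x ha]
    intro hc2
    apply ha
    rw [inv_inv] at hc2
    have h1 : h * (x : G) = 1 := mul_left_cancel (hc2.trans (mul_one g).symm)
    exact (inv_eq_of_mul_eq_one_right h1).symm

theorem hR_dom {G : Type*} [Group G] (g h : G) (x : {x : G // x ≠ 1}) :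
    x ∈ ((lmulPB g⁻¹).comp (lmulPB (g * h))).dom ↔
      ((x : G) ≠ h⁻¹ ∧ (x : G) ≠ (g * h)⁻¹) := by
  rw [PBij.mem_comp_dom]
  constructor
  · rintro ⟨ha, hb⟩
    have ha' : (x : G) ≠ (g * h)⁻¹ := ha
    have hb' : ((lmulPB (g * h)).toFun x : G) ≠ g⁻¹⁻¹ := hb
    rw [lm_coe_toFun _ x ha'] at hb'
    exact ⟨fun hc => hb' (by rw [hc]; group), ha'⟩
  · rintro ⟨ha, hb⟩
    refine ⟨mem_lm_dom.mpr hb, ?_⟩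
    show (lmulPB (g * h)).toFun x ∈ (lmulPB g⁻¹).dom
    rw [mem_lm_dom, lm_coe_toFun _ x hb]
    intro hc
    apply ha
    rw [inv_inv] at hc
    have h1 : h * (x : G) = 1 :=
      mul_left_cancel (a := g) (by rw [← mul_assoc, hc, mul_one])
    exact (inv_eq_of_mul_eq_one_right h1).symm

theorem hL_im {G : Type*} [Group G] (g h : G) (y : {x : G // x ≠ 1}) :
    y ∈ ((lmulPB g⁻¹).comp ((lmulPB g).comp (lmulPB h))).im ↔
      ((y : G) ≠ g⁻¹ ∧ (y : G) ≠ h) := by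
  rw [PBij.mem_comp_im, PBij.mem_comp_im]
  constructor
  · rintro ⟨ha, hb, hc⟩
    have ha' : (y : G) ≠ g⁻¹ := ha
    have hc' : ((lmulPB g).invFun ((lmulPB g⁻¹).invFun y) : G) ≠ h := hc
    rw [lm_coe_invFun g _ hb, lm_coe_invFun g⁻¹ y ha'] at hc'
    refine ⟨ha', fun hy => hc' ?_⟩
    rw [hy]; group
  · rintro ⟨ha, hb⟩
    have hmem : (lmulPB g⁻¹).invFun y ∈ (lmulPB g).im := by
      rw [mem_lm_im, lm_coe_invFun g⁻¹ y ha]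
      intro hc
      apply y.2
      rw [inv_inv] at hc
      exact mul_left_cancel (hc.trans (mul_one g).symm)
    refine ⟨mem_lm_im.mpr ha, hmem, ?_⟩
    rw [mem_lm_im, lm_coe_invFun g _ hmem, lm_coe_invFun g⁻¹ y ha]
    intro hc
    apply hb
    rw [inv_inv] at hc
    calc (y : G) = g⁻¹ * (g * y) := by group
    _ = h := by rw [hc]

theorem hR_im {G : Type*} [Group G] (g h : G) (y : {x : G // x ≠ 1}) :
    y ∈ ((lmulPB g⁻¹).comp (lmulPB (g * h))).im ↔
      ((y : G) ≠ g⁻¹ ∧ (y : G) ≠ h) := by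
  rw [PBij.mem_comp_im]
  constructor
  · rintro ⟨ha, hb⟩
    have ha' : (y : G) ≠ g⁻¹ := ha
    have hb' : ((lmulPB g⁻¹).invFun y : G) ≠ g * h := hb
    rw [lm_coe_invFun g⁻¹ y ha'] at hb'
    refine ⟨ha', fun hy => hb' ?_⟩
    rw [hy]; group
  · rintro ⟨ha, hb⟩
    refine ⟨mem_lm_im.mpr ha, ?_⟩
    rw [mem_lm_im, lm_coe_invFun g⁻¹ y ha]
    intro hc
    apply hb
    rw [inv_inv] at hc
    calc (y : G) = g⁻¹ * (g * y) := by group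
    _ = h := by rw [hc]; group

/-- the map `𝔩 : g ↦ λ_g |_{complement of {1, g⁻¹}}` is a unital
premorphism from `G` to the inverse monoid of partial bijections of `G \ {1}`. -/
theorem stmt18 {G : Type*} [Group G] :
    lmulPB (1 : G) = PBij.one {x : G // x ≠ 1} ∧
    (∀ g : G, lmulPB g⁻¹ = (lmulPB g).inv) ∧
    (∀ g h : G,
      (lmulPB g⁻¹).comp ((lmulPB g).comp (lmulPB h)) =
      (lmulPB g⁻¹).comp (lmulPB (g * h))) := by
  refine ⟨?_, ?_, ?_⟩
  · apply PBij.ext'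
    · ext x; simp [lmulPB, PBij.one, x.2]
    · ext x; simp [lmulPB, PBij.one, x.2]
    · funext x; simp [lmulPB, PBij.one, x.2]
    · funext x; simp [lmulPB, PBij.one, x.2]
  · intro g
    apply PBij.ext'
    · ext x; simp [lmulPB, PBij.inv]
    · ext x; simp [lmulPB, PBij.inv]
    · funext x; by_cases hx : (x : G) = g <;> simp [lmulPB, PBij.inv, hx]
    · funext x; by_cases hx : (x : G) = g⁻¹ <;> simp [lmulPB, PBij.inv, hx]
  · intro g h
    apply PBij.ext'
    · exact Set.ext fun x => (hL_dom g h x).trans (hR_dom g h x).symm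
    · exact Set.ext fun y => (hL_im g h y).trans (hR_im g h y).symm
    · funext x
      by_cases hx : (x : G) ≠ h⁻¹ ∧ (x : G) ≠ (g * h)⁻¹
      · have hxL := (hL_dom g h x).mpr hx
        have hxR := (hR_dom g h x).mpr hx
        rw [PBij.comp_toFun_pos _ _ _ hxL, PBij.comp_toFun_pos _ _ _ hxR,
          PBij.comp_toFun_pos _ _ _ hxL.1]
        apply Subtype.ext
        have hm1 : (lmulPB h).toFun x ∈ (lmulPB g).dom := hxL.1.2
        have hm2 : ((lmulPB g).comp (lmulPB h)).toFun x ∈ (lmulPB g⁻¹).dom := hxL.2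
        rw [PBij.comp_toFun_pos _ _ _ hxL.1] at hm2
        have hm3 : (lmulPB (g * h)).toFun x ∈ (lmulPB g⁻¹).dom := hxR.2
        rw [lm_coe_toFun g⁻¹ _ hm2, lm_coe_toFun g⁻¹ _ hm3,
          lm_coe_toFun g _ hm1, lm_coe_toFun h x hx.1, lm_coe_toFun _ x hx.2]
        group
      · have hxL : x ∉ ((lmulPB g⁻¹).comp ((lmulPB g).comp (lmulPB h))).dom :=
          fun hm => hx ((hL_dom g h x).mp hm)
        have hxR : x ∉ ((lmulPB g⁻¹).comp (lmulPB (g * h))).dom :=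
          fun hm => hx ((hR_dom g h x).mp hm)
        rw [PBij.comp_toFun_neg _ _ _ hxL, PBij.comp_toFun_neg _ _ _ hxR]
    · funext y
      by_cases hy : (y : G) ≠ g⁻¹ ∧ (y : G) ≠ h
      · have hyL := (hL_im g h y).mpr hy
        have hyR := (hR_im g h y).mpr hy
        rw [PBij.comp_invFun_pos _ _ _ hyL, PBij.comp_invFun_pos _ _ _ hyR,
          PBij.comp_invFun_pos _ _ _ hyL.2]
        apply Subtype.ext
        have hm1 : (lmulPB g⁻¹).invFun y ∈ (lmulPB g).im := hyL.2.1
        have hm2 : (lmulPB g).invFun ((lmulPB g⁻¹).invFun y) ∈ (lmulPB h).im := hyL.2.2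
        have hm3 : (lmulPB g⁻¹).invFun y ∈ (lmulPB (g * h)).im := hyR.2
        rw [lm_coe_invFun h _ hm2, lm_coe_invFun g _ hm1,
          lm_coe_invFun _ _ hm3, lm_coe_invFun g⁻¹ y hy.1]
        group
      · have hyL : y ∉ ((lmulPB g⁻¹).comp ((lmulPB g).comp (lmulPB h))).im :=
          fun hm => hy ((hL_im g h y).mp hm)
        have hyR : y ∉ ((lmulPB g⁻¹).comp (lmulPB (g * h))).im :=
          fun hm => hy ((hR_im g h y).mp hm)
        rw [PBij.comp_invFun_neg _ _ _ hyL, PBij.comp_invFun_neg _ _ _ hyR]
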